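/- arXiv:2510.06583 — 2 statements merged into one kernel-verified Lean document; each statement's English description precedes it below -/
import Mathlib

section
/- Let A_1, A_2, ..., A_N ∈ ℂ^{n×n}. If there exist α_1, ..., α_N ∈ ℝ such that the Minkowski sum of the segmental phase intervals satisfies Ψ_{α_1}(A_1) + Ψ_{α_2}(A_2) + ⋯ + Ψ_{α_N}(A_N) ⊂ (−π, π), i.e., ∑_{i=1}^N (α_i − Γ_{α_i}(A_i)) > −π and ∑_{i=1}^N (α_i + Γ_{α_i}(A_i)) < π, then I + A_1 A_2 ⋯ A_N is nonsingular. -/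
open scoped Pointwise Classical
open Complex

noncomputable section SRGDefs

/-- Apply a matrix to a vector in Euclidean space. -/
def mapply {n : ℕ} (C : Matrix (Fin n) (Fin n) ℂ) (x : EuclideanSpace ℂ (Fin n)) :
    EuclideanSpace ℂ (Fin n) :=
  Matrix.toEuclideanLin C x

/-- The θ-angle `∠_θ(x,y) = arccos (Re ⟨x, e^{-iθ} y⟩ / (‖x‖‖y‖))` between complex vectors,
with value `0` if `x = 0` or `y = 0`. -/
def angleTheta {n : ℕ} (θ : ℝ) (x y : EuclideanSpace ℂ (Fin n)) : ℝ :=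
  if x = 0 ∨ y = 0 then 0
  else Real.arccos ((inner ℂ x ((Complex.exp (-(θ : ℂ) * Complex.I)) • y) : ℂ).re / (‖x‖ * ‖y‖))

/-- The classical angle `∠(x,y) = arccos (Re ⟨x, y⟩ / (‖x‖‖y‖))` between complex vectors,
with value `0` if `x = 0` or `y = 0`. -/
def angleStd {n : ℕ} (x y : EuclideanSpace ℂ (Fin n)) : ℝ :=
  if x = 0 ∨ y = 0 then 0
  else Real.arccos ((inner ℂ x y : ℂ).re / (‖x‖ * ‖y‖))

/-- The θ-symmetric scaled relative graph
`SRG_θ(C) = { (‖Cx‖/‖x‖)·e^{i(θ ± ∠_θ(x,Cx))} : 0 ≠ x ∈ ℂ^n }`. -/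
def SRGt {n : ℕ} (θ : ℝ) (C : Matrix (Fin n) (Fin n) ℂ) : Set ℂ :=
  { w | ∃ x : EuclideanSpace ℂ (Fin n), x ≠ 0 ∧
      (w = (↑(‖mapply C x‖ / ‖x‖) : ℂ) *
          Complex.exp ((↑(θ + angleTheta θ x (mapply C x)) : ℂ) * Complex.I) ∨
       w = (↑(‖mapply C x‖ / ‖x‖) : ℂ) *
          Complex.exp ((↑(θ - angleTheta θ x (mapply C x)) : ℂ) * Complex.I)) }

/-- The standard scaled relative graph
`SRG(C) = { (‖Cx‖/‖x‖)·e^{±i∠(x,Cx)} : 0 ≠ x ∈ ℂ^n }`. -/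
def SRGstd {n : ℕ} (C : Matrix (Fin n) (Fin n) ℂ) : Set ℂ :=
  { w | ∃ x : EuclideanSpace ℂ (Fin n), x ≠ 0 ∧
      (w = (↑(‖mapply C x‖ / ‖x‖) : ℂ) *
          Complex.exp ((↑(angleStd x (mapply C x)) : ℂ) * Complex.I) ∨
       w = (↑(‖mapply C x‖ / ‖x‖) : ℂ) *
          Complex.exp (-((↑(angleStd x (mapply C x)) : ℂ) * Complex.I))) }

/-- θ-symmetric SRG of a set of matrices. -/
def SRGtSet {n : ℕ} (θ : ℝ) (𝒞 : Set (Matrix (Fin n) (Fin n) ℂ)) : Set ℂ :=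
  ⋃ C ∈ 𝒞, SRGt θ C

/-- Standard SRG of a set of matrices. -/
def SRGstdSet {n : ℕ} (𝒞 : Set (Matrix (Fin n) (Fin n) ℂ)) : Set ℂ :=
  ⋃ C ∈ 𝒞, SRGstd C

/-- `Arc_θ^+(z, z̄e^{2iθ}) = { |z|·e^{i(μ·arg z + θ(1−μ))} : μ ∈ [−1,1] }`. -/
def arcPlus (θ : ℝ) (z : ℂ) : Set ℂ :=
  { w | ∃ μ : ℝ, μ ∈ Set.Icc (-1 : ℝ) 1 ∧
      w = (↑‖z‖ : ℂ) *
        Complex.exp ((↑(μ * Complex.arg z + θ * (1 - μ)) : ℂ) * Complex.I) }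

/-- `Arc_θ^−(z, z̄e^{2iθ}) = −Arc_θ^+(−z, −z̄e^{2iθ})`. -/
def arcMinus (θ : ℝ) (z : ℂ) : Set ℂ := -(arcPlus θ (-z))

/-- `Arc^+(z, z̄) = { |z|·e^{iμ·arg z} : μ ∈ [−1,1] }`. -/
def arcPlus0 (z : ℂ) : Set ℂ :=
  { w | ∃ μ : ℝ, μ ∈ Set.Icc (-1 : ℝ) 1 ∧
      w = (↑‖z‖ : ℂ) * Complex.exp ((↑(μ * Complex.arg z) : ℂ) * Complex.I) }

/-- `Arc^−(z, z̄) = −Arc^+(−z, −z̄)`. -/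
def arcMinus0 (z : ℂ) : Set ℂ := -(arcPlus0 (-z))

/-- A matrix set satisfies the θ-arc property. -/
def arcProp {n : ℕ} (θ : ℝ) (𝒞 : Set (Matrix (Fin n) (Fin n) ℂ)) : Prop :=
  (∀ z ∈ SRGtSet θ 𝒞, arcPlus θ z ⊆ SRGtSet θ 𝒞) ∨
  (∀ z ∈ SRGtSet θ 𝒞, arcMinus θ z ⊆ SRGtSet θ 𝒞)

/-- A matrix set satisfies the (standard) arc property. -/
def arcPropStd {n : ℕ} (𝒞 : Set (Matrix (Fin n) (Fin n) ℂ)) : Prop :=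
  (∀ z ∈ SRGstdSet 𝒞, arcPlus0 z ⊆ SRGstdSet 𝒞) ∨
  (∀ z ∈ SRGstdSet 𝒞, arcMinus0 z ⊆ SRGstdSet 𝒞)

/-- The line segment `[z₁, z₂] = { μz₁ + (1−μ)z₂ : μ ∈ [0,1] }`. -/
def segmentC (z₁ z₂ : ℂ) : Set ℂ :=
  { w | ∃ μ : ℝ, μ ∈ Set.Icc (0 : ℝ) 1 ∧ w = (↑μ : ℂ) * z₁ + (↑(1 - μ) : ℂ) * z₂ }

/-- A matrix set satisfies the θ-chord property. -/
def chordProp {n : ℕ} (θ : ℝ) (𝒞 : Set (Matrix (Fin n) (Fin n) ℂ)) : Prop :=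
  ∀ z ∈ SRGtSet θ 𝒞,
    segmentC z ((starRingEnd ℂ) z * Complex.exp ((↑(2 * θ) : ℂ) * Complex.I)) ⊆ SRGtSet θ 𝒞

/-- The arc hull `Hull_arc(SRG_θ(C)) = ⋃_{z ∈ SRG_θ(C)} Arc_θ^+(z, z̄e^{2iθ})`. -/
def hullArc {n : ℕ} (θ : ℝ) (C : Matrix (Fin n) (Fin n) ℂ) : Set ℂ :=
  ⋃ z ∈ SRGt θ C, arcPlus θ z

/-- The phase spread `Γ_θ(C) = sup_{0 ≠ x} ∠_θ(x, Cx)`. -/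
def phaseSpread {n : ℕ} (θ : ℝ) (C : Matrix (Fin n) (Fin n) ℂ) : ℝ :=
  sSup { a : ℝ | ∃ x : EuclideanSpace ℂ (Fin n), x ≠ 0 ∧ a = angleTheta θ x (mapply C x) }

/-- The largest singular value `σ_max(C) = max_{‖x‖=1} ‖Cx‖`. -/
def sigmaMax {n : ℕ} (C : Matrix (Fin n) (Fin n) ℂ) : ℝ :=
  sSup { a : ℝ | ∃ x : EuclideanSpace ℂ (Fin n), ‖x‖ = 1 ∧ a = ‖mapply C x‖ }

/-- The smallest singular value `σ_min(C) = min_{‖x‖=1} ‖Cx‖`. -/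
def sigmaMin {n : ℕ} (C : Matrix (Fin n) (Fin n) ℂ) : ℝ :=
  sInf { a : ℝ | ∃ x : EuclideanSpace ℂ (Fin n), ‖x‖ = 1 ∧ a = ‖mapply C x‖ }

/-- The spectrum `Λ(C)` of a matrix: the set of eigenvalues. -/
def eigs {n : ℕ} (C : Matrix (Fin n) (Fin n) ℂ) : Set ℂ :=
  { μ : ℂ | ∃ v : Fin n → ℂ, v ≠ 0 ∧ C.mulVec v = μ • v }

end SRGDefs

section AuxLemmas
open InnerProductGeometry Real
open scoped InnerProductSpace

section Tri
variable {V : Type*} [NormedAddCommGroup V] [InnerProductSpace ℝ V]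

lemma unit_angle_inner (x y : V) (hx : ‖x‖ = 1) (hy : ‖y‖ = 1) :
    angle x y = Real.arccos ⟪x, y⟫_ℝ := by
  rw [angle, hx, hy]; norm_num

lemma proj_norm (x y : V) (hx : ‖x‖ = 1) (hy : ‖y‖ = 1) :
    ‖x - ⟪y, x⟫_ℝ • y‖ = Real.sin (angle x y) := by
  have h1 : ‖x - ⟪y, x⟫_ℝ • y‖ ^ 2 = 1 - ⟪x, y⟫_ℝ ^ 2 := by
    rw [← real_inner_self_eq_norm_sq]
    simp only [inner_sub_left, inner_sub_right, real_inner_smul_left, real_inner_smul_right,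
      real_inner_comm x y]
    rw [real_inner_self_eq_norm_sq x, real_inner_self_eq_norm_sq y, hx, hy]
    ring
  have h2 : Real.sin (angle x y) = Real.sqrt (1 - ⟪x, y⟫_ℝ ^ 2) := by
    rw [unit_angle_inner x y hx hy, Real.sin_arccos]
  rw [h2, ← h1, Real.sqrt_sq (norm_nonneg _)]

lemma angle_triangle' (x y z : V) (hx : ‖x‖ = 1) (hy : ‖y‖ = 1) (hz : ‖z‖ = 1) :
    angle x z ≤ angle x y + angle y z := by
  set a := angle x y with ha
  set c := angle y z with hc
  by_cases hpi : π ≤ a + c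
  · exact le_trans (angle_le_pi x z) hpi
  push_neg at hpi
  set p := x - ⟪y, x⟫_ℝ • y with hp
  set q := z - ⟪y, z⟫_ℝ • y with hq
  have hinner : ⟪x, z⟫_ℝ = ⟪x, y⟫_ℝ * ⟪y, z⟫_ℝ + ⟪p, q⟫_ℝ := by
    simp only [hp, hq, inner_sub_left, inner_sub_right, real_inner_smul_left,
      real_inner_smul_right, real_inner_comm x y]
    rw [real_inner_self_eq_norm_sq y, hy]
    ring
  have hpq : -(‖p‖ * ‖q‖) ≤ ⟪p, q⟫_ℝ := neg_le_of_abs_le (abs_real_inner_le_norm p q)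
  have hcosa : Real.cos a = ⟪x, y⟫_ℝ := by
    rw [ha, unit_angle_inner x y hx hy]
    exact Real.cos_arccos (neg_le_of_abs_le (by simpa [hx, hy] using abs_real_inner_le_norm x y))
      (le_of_abs_le (by simpa [hx, hy] using abs_real_inner_le_norm x y))
  have hcosc : Real.cos c = ⟪y, z⟫_ℝ := by
    rw [hc, unit_angle_inner y z hy hz]
    exact Real.cos_arccos (neg_le_of_abs_le (by simpa [hy, hz] using abs_real_inner_le_norm y z))
      (le_of_abs_le (by simpa [hy, hz] using abs_real_inner_le_norm y z))
  have hnp : ‖p‖ = Real.sin a := proj_norm x y hx hy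
  have hnq : ‖q‖ = Real.sin c := by
    have h := proj_norm z y hz hy
    rw [angle_comm z y] at h
    exact h
  have key : Real.cos (a + c) ≤ ⟪x, z⟫_ℝ := by
    rw [Real.cos_add, hinner, ← hcosa, ← hcosc]
    rw [hnp, hnq] at hpq
    linarith
  have h1 : angle x z = Real.arccos ⟪x, z⟫_ℝ := unit_angle_inner x z hx hz
  rw [h1, ← Real.arccos_cos (by linarith [angle_nonneg x y, angle_nonneg y z] : (0:ℝ) ≤ a + c) hpi.le]
  -- arccos antitone
  rw [Real.arccos, Real.arccos]
  have := Real.monotone_arcsin key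
  linarith

lemma angle_triangle (x y z : V) : angle x z ≤ angle x y + angle y z := by
  by_cases hx : x = 0
  · simp [hx, angle_zero_left]
    linarith [angle_nonneg y z]
  by_cases hy : y = 0
  · simp [hy, angle_zero_left, angle_zero_right]
    linarith [angle_le_pi x z, Real.pi_pos]
  by_cases hz : z = 0
  · simp [hz, angle_zero_right]
    linarith [angle_nonneg x y]
  have hx' : ‖x‖ ≠ 0 := norm_ne_zero_iff.mpr hx
  have hy' : ‖y‖ ≠ 0 := norm_ne_zero_iff.mpr hy
  have hz' : ‖z‖ ≠ 0 := norm_ne_zero_iff.mpr hz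
  have e1 : angle x z = angle (‖x‖⁻¹ • x) (‖z‖⁻¹ • z) := by
    rw [angle_smul_left_of_pos, angle_smul_right_of_pos] <;> positivity
  have e2 : angle x y = angle (‖x‖⁻¹ • x) (‖y‖⁻¹ • y) := by
    rw [angle_smul_left_of_pos, angle_smul_right_of_pos] <;> positivity
  have e3 : angle y z = angle (‖y‖⁻¹ • y) (‖z‖⁻¹ • z) := by
    rw [angle_smul_left_of_pos, angle_smul_right_of_pos] <;> positivity
  rw [e1, e2, e3]
  apply angle_triangle' <;> simp [norm_smul, abs_of_nonneg, inv_mul_cancel₀, hx', hy', hz']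

end Tri



section Main
open Complex

lemma reInnerE {n : ℕ} (x y : EuclideanSpace ℂ (Fin n)) :
    ⟪x, y⟫_ℝ = (inner ℂ x y : ℂ).re := by
  simp [PiLp.inner_apply, Complex.re_sum, RCLike.inner_apply]

lemma angle_csmul {n : ℕ} (c : ℂ) (hc : c ≠ 0) (x y : EuclideanSpace ℂ (Fin n)) :
    angle (c • x) (c • y) = angle x y := by
  have hre : (inner ℂ (c • x) (c • y) : ℂ).re = ‖c‖ ^ 2 * (inner ℂ x y : ℂ).re := by
    rw [inner_smul_left, inner_smul_right, ← mul_assoc,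
      mul_comm ((starRingEnd ℂ) c) c, Complex.mul_conj, Complex.re_ofReal_mul,
      Complex.normSq_eq_norm_sq]
  unfold InnerProductGeometry.angle
  rw [reInnerE, reInnerE, hre, norm_smul, norm_smul]
  have hcn : ‖c‖ ≠ 0 := norm_ne_zero_iff.mpr hc
  congr 1
  rw [show ‖c‖ * ‖x‖ * (‖c‖ * ‖y‖) = ‖c‖ ^ 2 * (‖x‖ * ‖y‖) by ring,
    mul_div_mul_left _ _ (pow_ne_zero 2 hcn)]

lemma angleTheta_eq_angle {n : ℕ} (θ : ℝ) (x y : EuclideanSpace ℂ (Fin n))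
    (hx : x ≠ 0) (hy : y ≠ 0) :
    angleTheta θ x y = angle ((Complex.exp ((θ : ℂ) * Complex.I)) • x) y := by
  rw [angleTheta, if_neg (by tauto)]
  unfold InnerProductGeometry.angle
  rw [reInnerE, inner_smul_left, inner_smul_right, norm_smul]
  have h1 : (starRingEnd ℂ) (Complex.exp ((θ : ℂ) * Complex.I)) =
      Complex.exp (-(θ : ℂ) * Complex.I) := by
    rw [← Complex.exp_conj]
    congr 1
    simp [Complex.conj_I]
  have h2 : ‖Complex.exp ((θ : ℂ) * Complex.I)‖ = 1 := by
    rw [Complex.norm_exp_ofReal_mul_I]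
  rw [h1, h2, one_mul]

lemma mapply_mul {n : ℕ} (M N : Matrix (Fin n) (Fin n) ℂ) (x : EuclideanSpace ℂ (Fin n)) :
    mapply (M * N) x = mapply M (mapply N x) := by
  simp [mapply, Matrix.toEuclideanLin_apply, Matrix.mulVec_mulVec]

lemma mapply_one {n : ℕ} (x : EuclideanSpace ℂ (Fin n)) : mapply 1 x = x := by
  simp [mapply, Matrix.toEuclideanLin_apply, Matrix.one_mulVec]

lemma angleTheta_nonneg {n : ℕ} (θ : ℝ) (x y : EuclideanSpace ℂ (Fin n)) :
    0 ≤ angleTheta θ x y := by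
  unfold angleTheta; split
  · exact le_refl 0
  · exact Real.arccos_nonneg _

lemma angleTheta_le_pi {n : ℕ} (θ : ℝ) (x y : EuclideanSpace ℂ (Fin n)) :
    angleTheta θ x y ≤ π := by
  unfold angleTheta; split
  · exact Real.pi_pos.le
  · exact Real.arccos_le_pi _

lemma le_phaseSpread {n : ℕ} (θ : ℝ) (C : Matrix (Fin n) (Fin n) ℂ)
    (x : EuclideanSpace ℂ (Fin n)) (hx : x ≠ 0) :
    angleTheta θ x (mapply C x) ≤ phaseSpread θ C := by
  apply le_csSup
  · exact ⟨π, by rintro a ⟨z, hz, rfl⟩; exact angleTheta_le_pi _ _ _⟩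
  · exact ⟨x, hx, rfl⟩

lemma chain {n : ℕ} (l : List (Matrix (Fin n) (Fin n) ℂ × ℝ)) (v : EuclideanSpace ℂ (Fin n))
    (hv : v ≠ 0) (hP : mapply (l.map Prod.fst).prod v ≠ 0) :
    angle ((Complex.exp (((l.map Prod.snd).sum : ℂ) * Complex.I)) • v)
      (mapply (l.map Prod.fst).prod v)
      ≤ (l.map fun p => phaseSpread p.2 p.1).sum := by
  induction l with
  | nil =>
      simp only [List.map_nil, List.prod_nil, List.sum_nil, mapply_one]
      norm_num
      exact (angle_self hv).le
  | cons hd tl ih =>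
      obtain ⟨A₀, α₀⟩ := hd
      simp only [List.map_cons, List.prod_cons, List.sum_cons] at hP ⊢
      rw [mapply_mul] at hP ⊢
      set u := mapply (tl.map Prod.fst).prod v with hu_def
      have hu : u ≠ 0 := by
        intro h
        apply hP
        rw [h]
        exact map_zero (Matrix.toEuclideanLin A₀)
      have IH := ih hu
      have hstep : angle ((Complex.exp ((α₀ : ℂ) * Complex.I)) • u) (mapply A₀ u)
          ≤ phaseSpread α₀ A₀ := by
        rw [← angleTheta_eq_angle α₀ u (mapply A₀ u) hu hP]
        exact le_phaseSpread α₀ A₀ u hu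
      have hsplit : ((Complex.exp (((α₀ + (tl.map Prod.snd).sum : ℝ) : ℂ) * Complex.I)) • v
            : EuclideanSpace ℂ (Fin n)) =
          (Complex.exp ((α₀ : ℂ) * Complex.I)) •
            ((Complex.exp ((((tl.map Prod.snd).sum : ℝ) : ℂ) * Complex.I)) • v) := by
        rw [smul_smul, ← Complex.exp_add]
        congr 1
        push_cast
        ring
      have heq : angle ((Complex.exp (((α₀ + (tl.map Prod.snd).sum : ℝ) : ℂ) * Complex.I)) • v)
          ((Complex.exp ((α₀ : ℂ) * Complex.I)) • u)
          = angle ((Complex.exp ((((tl.map Prod.snd).sum : ℝ) : ℂ) * Complex.I)) • v) u := by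
        rw [hsplit]
        exact angle_csmul _ (Complex.exp_ne_zero _) _ _
      calc angle ((Complex.exp (((α₀ + (tl.map Prod.snd).sum : ℝ) : ℂ) * Complex.I)) • v)
            (mapply A₀ u)
          ≤ angle ((Complex.exp (((α₀ + (tl.map Prod.snd).sum : ℝ) : ℂ) * Complex.I)) • v)
              ((Complex.exp ((α₀ : ℂ) * Complex.I)) • u)
            + angle ((Complex.exp ((α₀ : ℂ) * Complex.I)) • u) (mapply A₀ u) :=
            angle_triangle _ _ _
        _ ≤ (tl.map fun p => phaseSpread p.2 p.1).sum + phaseSpread α₀ A₀ := by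
            rw [heq]; exact add_le_add IH hstep
        _ = phaseSpread α₀ A₀ + (tl.map fun p => phaseSpread p.2 p.1).sum := by ring

end Main

section Main2
open Complex

lemma conj_exp_mul_I (θ : ℝ) : (starRingEnd ℂ) (Complex.exp ((θ : ℂ) * Complex.I)) =
    Complex.exp (-(θ : ℂ) * Complex.I) := by
  rw [← Complex.exp_conj]
  congr 1
  simp [Complex.conj_I]

lemma norm_exp_mul_I (θ : ℝ) : ‖Complex.exp ((θ : ℂ) * Complex.I)‖ = 1 := by
  rw [Complex.norm_exp_ofReal_mul_I]


end Main2

end AuxLemmas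

/-- segmental-phase type nonsingularity condition. -/
theorem stmt8 {n N : ℕ} (A : Fin N → Matrix (Fin n) (Fin n) ℂ) (α : Fin N → ℝ)
    (h1 : -Real.pi < ∑ i, (α i - phaseSpread (α i) (A i)))
    (h2 : ∑ i, (α i + phaseSpread (α i) (A i)) < Real.pi) :
    IsUnit (1 + (List.ofFn A).prod) := by
  by_contra hunit
  set P := (List.ofFn A).prod with hPdef
  have hdet : (1 + P).det = 0 := by
    by_contra hd
    exact hunit ((Matrix.isUnit_iff_isUnit_det _).mpr (isUnit_iff_ne_zero.mpr hd))
  obtain ⟨v, hv, hveq⟩ := Matrix.exists_mulVec_eq_zero_iff.mpr hdet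
  have hPv : P.mulVec v = -v := by
    rw [Matrix.add_mulVec, Matrix.one_mulVec] at hveq
    exact eq_neg_of_add_eq_zero_right hveq
  set v' : EuclideanSpace ℂ (Fin n) := (WithLp.equiv 2 (Fin n → ℂ)).symm v with hv'def
  have hv' : v' ≠ 0 := by
    intro h
    apply hv
    have h2 := congrArg (WithLp.equiv 2 (Fin n → ℂ)) h
    rwa [hv'def, Equiv.apply_symm_apply] at h2
  have hmap : mapply P v' = -v' := by
    rw [hv'def, mapply, WithLp.equiv_symm_apply, Matrix.toEuclideanLin_apply_piLp_toLp, hPv]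
    rfl
  set l := List.ofFn (fun i : Fin N => (A i, α i)) with hl
  have hfst : l.map Prod.fst = List.ofFn A := by rw [hl, List.map_ofFn]; rfl
  have hsnd : (l.map Prod.snd).sum = ∑ i, α i := by rw [hl, List.map_ofFn, List.sum_ofFn]; rfl
  have hgam : (l.map fun p => phaseSpread p.2 p.1).sum = ∑ i, phaseSpread (α i) (A i) := by
    rw [hl, List.map_ofFn, List.sum_ofFn]; rfl
  set σ := ∑ i, α i with hσ
  set G := ∑ i, phaseSpread (α i) (A i) with hG
  have hG0 : 0 ≤ G := Finset.sum_nonneg fun i _ =>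
    le_trans (angleTheta_nonneg _ _ _) (le_phaseSpread (α i) (A i) v' hv')
  have h1' : -Real.pi < σ - G := by
    rw [hσ, hG, ← Finset.sum_sub_distrib]; exact h1
  have h2' : σ + G < Real.pi := by
    rw [hσ, hG, ← Finset.sum_add_distrib]; exact h2
  have habs : |σ| < Real.pi := abs_lt.mpr ⟨by linarith, by linarith⟩
  have hchain := chain l v' hv' (by rw [hfst, ← hPdef, hmap]; exact neg_ne_zero.mpr hv')
  rw [hfst, ← hPdef, hsnd, hgam, hmap] at hchain
  have hnv : ‖v'‖ ≠ 0 := norm_ne_zero_iff.mpr hv'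
  have hangle : InnerProductGeometry.angle ((Complex.exp ((σ : ℂ) * Complex.I)) • v') (-v') = Real.pi - |σ| := by
    have hre : (inner ℂ ((Complex.exp ((σ : ℂ) * Complex.I)) • v') (-v') : ℂ).re
        = -(Real.cos σ * ‖v'‖ ^ 2) := by
      rw [inner_neg_right, inner_smul_left, conj_exp_mul_I]
      have key : (inner ℂ v' v' : ℂ) = ((‖v'‖ ^ 2 : ℝ) : ℂ) := by
        rw [inner_self_eq_norm_sq_to_K]; norm_cast
      have hc : (Complex.exp (-(σ : ℂ) * Complex.I)).re = Real.cos σ := by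
        rw [show -(σ : ℂ) * Complex.I = ((-σ : ℝ) : ℂ) * Complex.I by push_cast; ring,
          Complex.exp_ofReal_mul_I_re, Real.cos_neg]
      rw [key, Complex.neg_re, mul_comm, Complex.re_ofReal_mul, hc]
      ring
    unfold InnerProductGeometry.angle
    rw [reInnerE, hre, norm_smul, norm_neg, norm_exp_mul_I, one_mul]
    have hq : -(Real.cos σ * ‖v'‖ ^ 2) / (‖v'‖ * ‖v'‖) = -Real.cos σ := by
      rw [show ‖v'‖ * ‖v'‖ = ‖v'‖ ^ 2 from (sq _).symm, neg_div, mul_div_assoc,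
        div_self (pow_ne_zero 2 hnv), mul_one]
    rw [hq, Real.arccos_neg, ← Real.cos_abs, Real.arccos_cos (abs_nonneg σ) habs.le]
  rw [hangle] at hchain
  rcases abs_cases σ with ⟨he, _⟩ | ⟨he, _⟩ <;> (rw [he] at hchain; linarith)
end

section
/- Let C ∈ ℂ^{n×n}, θ ∈ ℝ, and 0 ≠ μ ∈ ℝ. Then SRG_θ(μC) = μ·SRG_θ(C) and SRG_θ(C + μe^{iθ}I) = SRG_θ(C) + μe^{iθ}, where for a set S ⊂ ℂ, μ·S = {μs : s ∈ S} and S + w = {s + w : s ∈ S}. -/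
open scoped Pointwise Classical
open Complex

noncomputable section SRGAux

variable {n : ℕ}

def pP (θ : ℝ) (x y : EuclideanSpace ℂ (Fin n)) : ℝ :=
  (inner ℂ x ((Complex.exp (-(θ : ℂ) * Complex.I)) • y) : ℂ).re / (‖x‖^2)

def qQ (θ : ℝ) (x y : EuclideanSpace ℂ (Fin n)) : ℝ :=
  Real.sqrt ((‖y‖/‖x‖)^2 - (pP θ x y)^2)

lemma t_bound (θ : ℝ) (x y : EuclideanSpace ℂ (Fin n)) :
    |(inner ℂ x ((Complex.exp (-(θ : ℂ) * Complex.I)) • y) : ℂ).re| ≤ ‖x‖ * ‖y‖ := by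
  have h1 : ‖(Complex.exp (-(θ : ℂ) * Complex.I)) • y‖ = ‖y‖ := by
    rw [norm_smul]
    simp [Complex.norm_exp]
  calc |(inner ℂ x ((Complex.exp (-(θ : ℂ) * Complex.I)) • y) : ℂ).re|
      ≤ ‖(inner ℂ x ((Complex.exp (-(θ : ℂ) * Complex.I)) • y) : ℂ)‖ := Complex.abs_re_le_norm _
    _ ≤ ‖x‖ * ‖(Complex.exp (-(θ : ℂ) * Complex.I)) • y‖ := norm_inner_le_norm _ _
    _ = ‖x‖ * ‖y‖ := by rw [h1]

lemma rcos (θ : ℝ) (x y : EuclideanSpace ℂ (Fin n)) (hx : x ≠ 0) :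
    (‖y‖/‖x‖) * Real.cos (angleTheta θ x y) = pP θ x y := by
  have hxn : ‖x‖ ≠ 0 := norm_ne_zero_iff.mpr hx
  by_cases hy : y = 0
  · simp [angleTheta, pP, hy]
  · have hyn : ‖y‖ ≠ 0 := norm_ne_zero_iff.mpr hy
    set R := (inner ℂ x ((Complex.exp (-(θ : ℂ) * Complex.I)) • y) : ℂ).re
    have hb := t_bound θ x y
    have hb1 : -1 ≤ R / (‖x‖ * ‖y‖) ∧ R / (‖x‖ * ‖y‖) ≤ 1 := by
      rw [abs_le] at hb
      have hpos : (0:ℝ) < ‖x‖ * ‖y‖ := by positivity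
      constructor
      · rw [le_div_iff₀ hpos]; linarith [hb.1]
      · rw [div_le_one hpos]; exact hb.2
    rw [angleTheta, if_neg (by tauto), Real.cos_arccos hb1.1 hb1.2]
    unfold pP
    rw [div_mul_div_comm]
    rw [div_eq_div_iff (by positivity) (by positivity)]
    ring

lemma rsin (θ : ℝ) (x y : EuclideanSpace ℂ (Fin n)) (hx : x ≠ 0) :
    (‖y‖/‖x‖) * Real.sin (angleTheta θ x y) = qQ θ x y := by
  have hxn : ‖x‖ ≠ 0 := norm_ne_zero_iff.mpr hx
  by_cases hy : y = 0
  · simp [angleTheta, qQ, pP, hy]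
  · have hyn : ‖y‖ ≠ 0 := norm_ne_zero_iff.mpr hy
    set R := (inner ℂ x ((Complex.exp (-(θ : ℂ) * Complex.I)) • y) : ℂ).re with hR
    rw [angleTheta, if_neg (by tauto), Real.sin_arccos]
    have hr : (0:ℝ) ≤ ‖y‖/‖x‖ := by positivity
    rw [← Real.sqrt_sq hr, ← Real.sqrt_mul (sq_nonneg _)]
    unfold qQ pP
    congr 1
    rw [mul_sub, mul_one]
    congr 1
    rw [div_pow, div_pow, div_mul_div_comm, div_pow]
    rw [div_eq_div_iff (by positivity) (by positivity)]
    ring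

lemma key_plus (θ : ℝ) (x y : EuclideanSpace ℂ (Fin n)) (hx : x ≠ 0) :
    (↑(‖y‖ / ‖x‖) : ℂ) * Complex.exp ((↑(θ + angleTheta θ x y) : ℂ) * Complex.I)
      = Complex.exp ((θ:ℂ) * Complex.I) * (↑(pP θ x y) + ↑(qQ θ x y) * Complex.I) := by
  have h1 := rcos θ x y hx
  have h2 := rsin θ x y hx
  set α := angleTheta θ x y with hαdef
  have hsplit : ((θ + α : ℝ) : ℂ) * Complex.I = (θ:ℂ) * Complex.I + (α:ℂ) * Complex.I := by
    push_cast; ring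
  have hα : Complex.exp ((α:ℂ) * Complex.I)
      = (↑(Real.cos α) : ℂ) + (↑(Real.sin α) : ℂ) * Complex.I := by
    rw [Complex.exp_mul_I, Complex.ofReal_cos, Complex.ofReal_sin]
  rw [hsplit, Complex.exp_add, hα, ← h1, ← h2]
  push_cast
  ring

lemma key_minus (θ : ℝ) (x y : EuclideanSpace ℂ (Fin n)) (hx : x ≠ 0) :
    (↑(‖y‖ / ‖x‖) : ℂ) * Complex.exp ((↑(θ - angleTheta θ x y) : ℂ) * Complex.I)
      = Complex.exp ((θ:ℂ) * Complex.I) * (↑(pP θ x y) - ↑(qQ θ x y) * Complex.I) := by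
  have h1 := rcos θ x y hx
  have h2 := rsin θ x y hx
  set α := angleTheta θ x y with hαdef
  have hsplit : ((θ - α : ℝ) : ℂ) * Complex.I = (θ:ℂ) * Complex.I + ((-α : ℝ):ℂ) * Complex.I := by
    push_cast; ring
  have hα : Complex.exp (((-α : ℝ):ℂ) * Complex.I)
      = (↑(Real.cos α) : ℂ) - (↑(Real.sin α) : ℂ) * Complex.I := by
    rw [Complex.exp_mul_I, Complex.ofReal_cos, Complex.ofReal_sin]
    push_cast
    rw [Complex.cos_neg, Complex.sin_neg]
    ring
  rw [hsplit, Complex.exp_add, hα, ← h1, ← h2]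
  push_cast
  ring

lemma pP_smul (θ μ : ℝ) (x y : EuclideanSpace ℂ (Fin n)) :
    pP θ x ((μ:ℂ) • y) = μ * pP θ x y := by
  unfold pP
  rw [smul_comm, inner_smul_right]
  simp [Complex.mul_re, mul_div_assoc, inner_smul_right]

lemma qQ_smul (θ μ : ℝ) (x y : EuclideanSpace ℂ (Fin n)) :
    qQ θ x ((μ:ℂ) • y) = |μ| * qQ θ x y := by
  unfold qQ
  rw [pP_smul, norm_smul]
  have h : ‖(μ:ℂ)‖ = |μ| := (Complex.norm_real μ).trans (Real.norm_eq_abs μ)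
  rw [h, mul_div_assoc, mul_pow, mul_pow]
  rw [show |μ|^2*(‖y‖/‖x‖)^2 - μ^2*(pP θ x y)^2 = μ^2*((‖y‖/‖x‖)^2-(pP θ x y)^2) by
    rw [_root_.sq_abs μ]; ring]
  rw [Real.sqrt_mul (sq_nonneg μ), Real.sqrt_sq_eq_abs]

lemma norm_eshift (θ : ℝ) : ‖Complex.exp (-(θ:ℂ) * Complex.I)‖ = 1 := by
  simp [Complex.norm_exp]

lemma eshift_mul (θ : ℝ) :
    Complex.exp (-(θ:ℂ) * Complex.I) * Complex.exp ((θ:ℂ) * Complex.I) = 1 := by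
  rw [← Complex.exp_add]; ring_nf; exact Complex.exp_zero

lemma pP_shift (θ μ : ℝ) (x y : EuclideanSpace ℂ (Fin n)) (hx : x ≠ 0) :
    pP θ x (y + ((μ:ℂ) * Complex.exp ((θ:ℂ) * Complex.I)) • x) = pP θ x y + μ := by
  have hxn : ‖x‖ ≠ 0 := norm_ne_zero_iff.mpr hx
  unfold pP
  rw [smul_add, inner_add_right, smul_smul]
  have hc : Complex.exp (-(θ:ℂ) * Complex.I) * ((μ:ℂ) * Complex.exp ((θ:ℂ) * Complex.I))
      = (μ:ℂ) := by rw [mul_comm ((μ:ℂ)) _, ← mul_assoc, eshift_mul]; ring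
  have hmu : (inner ℂ x ((μ:ℂ) • x) : ℂ).re = μ * ‖x‖^2 := by
    rw [inner_smul_right, inner_self_eq_norm_sq_to_K]
    simp [Complex.mul_re, ← Complex.ofReal_pow]
  rw [hc, Complex.add_re, hmu, add_div, mul_div_assoc, div_self (by positivity), mul_one]

lemma re_inner_shift (θ μ : ℝ) (x y : EuclideanSpace ℂ (Fin n)) :
    (inner ℂ y (((μ:ℂ) * Complex.exp ((θ:ℂ) * Complex.I)) • x) : ℂ).re
      = μ * (inner ℂ x (Complex.exp (-(θ:ℂ) * Complex.I) • y) : ℂ).re := by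
  rw [inner_smul_right]
  have h1 : (inner ℂ x (Complex.exp (-(θ:ℂ) * Complex.I) • y) : ℂ)
      = Complex.exp (-(θ:ℂ) * Complex.I) * (inner ℂ x y : ℂ) := inner_smul_right _ _ _
  have h2 : (inner ℂ y x : ℂ) = starRingEnd ℂ (inner ℂ x y : ℂ) := (inner_conj_symm _ _).symm
  rw [h1, h2]
  have h3 : starRingEnd ℂ (Complex.exp (-(θ:ℂ) * Complex.I)) = Complex.exp ((θ:ℂ) * Complex.I) := by
    rw [← Complex.exp_conj]
    congr 1
    simp
  rw [← h3, mul_assoc, ← map_mul]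
  obtain ⟨z, hz⟩ : ∃ z : ℂ, Complex.exp (-(θ:ℂ) * Complex.I) * (inner ℂ x y : ℂ) = z := ⟨_, rfl⟩
  rw [hz]
  simp [Complex.mul_re]

lemma qQ_shift (θ μ : ℝ) (x y : EuclideanSpace ℂ (Fin n)) (hx : x ≠ 0) :
    qQ θ x (y + ((μ:ℂ) * Complex.exp ((θ:ℂ) * Complex.I)) • x) = qQ θ x y := by
  have hxn : ‖x‖ ≠ 0 := norm_ne_zero_iff.mpr hx
  unfold qQ
  rw [pP_shift θ μ x y hx]
  congr 1
  have hnc : ‖(μ:ℂ) * Complex.exp ((θ:ℂ) * Complex.I)‖ = |μ| := by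
    rw [norm_mul, Complex.norm_real,
      Complex.norm_exp]
    simp
  have hns : ‖y + ((μ:ℂ) * Complex.exp ((θ:ℂ) * Complex.I)) • x‖^2
      = ‖y‖^2 + 2 * (μ * (inner ℂ x (Complex.exp (-(θ:ℂ) * Complex.I) • y) : ℂ).re) + μ^2 * ‖x‖^2 := by
    rw [norm_add_sq (𝕜 := ℂ)]
    simp only [RCLike.re_to_complex]
    rw [re_inner_shift θ μ x y, norm_smul, hnc, mul_pow, _root_.sq_abs μ]
  rw [div_pow, div_pow, hns]
  unfold pP
  field_simp
  ring


lemma mapply_smul (c : ℂ) (C : Matrix (Fin n) (Fin n) ℂ) (x : EuclideanSpace ℂ (Fin n)) :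
    mapply (c • C) x = c • mapply C x := by
  simp [mapply, map_smul]

lemma mapply_add_smul_one (C : Matrix (Fin n) (Fin n) ℂ) (c : ℂ) (x : EuclideanSpace ℂ (Fin n)) :
    mapply (C + c • (1 : Matrix (Fin n) (Fin n) ℂ)) x = mapply C x + c • x := by
  have h1 : Matrix.toEuclideanLin (1 : Matrix (Fin n) (Fin n) ℂ) x = x := by
    simp [Matrix.toEuclideanLin_apply, Matrix.one_mulVec]
  simp [mapply, map_add, map_smul, h1]

lemma mem_SRGt (θ : ℝ) (C : Matrix (Fin n) (Fin n) ℂ) (w : ℂ) :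
    w ∈ SRGt θ C ↔ ∃ x : EuclideanSpace ℂ (Fin n), x ≠ 0 ∧
      (w = Complex.exp ((θ:ℂ) * Complex.I) *
            (↑(pP θ x (mapply C x)) + ↑(qQ θ x (mapply C x)) * Complex.I) ∨
       w = Complex.exp ((θ:ℂ) * Complex.I) *
            (↑(pP θ x (mapply C x)) - ↑(qQ θ x (mapply C x)) * Complex.I)) := by
  unfold SRGt
  simp only [Set.mem_setOf_eq]
  refine exists_congr fun x => and_congr_right fun hx => ?_
  rw [key_plus θ x (mapply C x) hx, key_minus θ x (mapply C x) hx]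

end SRGAux

/-- real scaling and θ-direction translation of the θ-symmetric SRG. -/
theorem stmt12 {n : ℕ} (C : Matrix (Fin n) (Fin n) ℂ) (θ : ℝ) (μ : ℝ) (hμ : μ ≠ 0) :
    SRGt θ ((μ : ℂ) • C) = (fun z : ℂ => (μ : ℂ) * z) '' SRGt θ C ∧
    SRGt θ (C + ((μ : ℂ) * Complex.exp ((θ : ℂ) * Complex.I)) • (1 : Matrix (Fin n) (Fin n) ℂ)) =
      (fun z : ℂ => z + (μ : ℂ) * Complex.exp ((θ : ℂ) * Complex.I)) '' SRGt θ C := by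
  constructor
  · -- scaling
    ext w
    rw [mem_SRGt]
    simp only [Set.mem_image, mem_SRGt]
    have hP : ∀ x : EuclideanSpace ℂ (Fin n),
        pP θ x (mapply ((μ:ℂ) • C) x) = μ * pP θ x (mapply C x) := fun x => by
      rw [mapply_smul, pP_smul]
    have hQ : ∀ x : EuclideanSpace ℂ (Fin n),
        qQ θ x (mapply ((μ:ℂ) • C) x) = |μ| * qQ θ x (mapply C x) := fun x => by
      rw [mapply_smul, qQ_smul]
    rcases abs_cases μ with ⟨ha, _⟩ | ⟨ha, _⟩
    · constructor
      · rintro ⟨x, hx, h | h⟩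
        · exact ⟨_, ⟨x, hx, Or.inl rfl⟩, by rw [h, hP, hQ, ha]; push_cast; ring⟩
        · exact ⟨_, ⟨x, hx, Or.inr rfl⟩, by rw [h, hP, hQ, ha]; push_cast; ring⟩
      · rintro ⟨z, ⟨x, hx, h | h⟩, hw⟩
        · exact ⟨x, hx, Or.inl (by rw [← hw, h, hP, hQ, ha]; push_cast; ring)⟩
        · exact ⟨x, hx, Or.inr (by rw [← hw, h, hP, hQ, ha]; push_cast; ring)⟩
    · constructor
      · rintro ⟨x, hx, h | h⟩
        · exact ⟨_, ⟨x, hx, Or.inr rfl⟩, by rw [h, hP, hQ, ha]; push_cast; ring⟩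
        · exact ⟨_, ⟨x, hx, Or.inl rfl⟩, by rw [h, hP, hQ, ha]; push_cast; ring⟩
      · rintro ⟨z, ⟨x, hx, h | h⟩, hw⟩
        · exact ⟨x, hx, Or.inr (by rw [← hw, h, hP, hQ, ha]; push_cast; ring)⟩
        · exact ⟨x, hx, Or.inl (by rw [← hw, h, hP, hQ, ha]; push_cast; ring)⟩
  · -- translation
    ext w
    rw [mem_SRGt]
    simp only [Set.mem_image, mem_SRGt]
    have hP : ∀ x : EuclideanSpace ℂ (Fin n), x ≠ 0 →
        pP θ x (mapply (C + ((μ:ℂ) * Complex.exp ((θ:ℂ) * Complex.I)) •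
            (1 : Matrix (Fin n) (Fin n) ℂ)) x) = pP θ x (mapply C x) + μ := fun x hx => by
      rw [mapply_add_smul_one, pP_shift θ μ x (mapply C x) hx]
    have hQ : ∀ x : EuclideanSpace ℂ (Fin n), x ≠ 0 →
        qQ θ x (mapply (C + ((μ:ℂ) * Complex.exp ((θ:ℂ) * Complex.I)) •
            (1 : Matrix (Fin n) (Fin n) ℂ)) x) = qQ θ x (mapply C x) := fun x hx => by
      rw [mapply_add_smul_one, qQ_shift θ μ x (mapply C x) hx]
    constructor
    · rintro ⟨x, hx, h | h⟩
      · exact ⟨_, ⟨x, hx, Or.inl rfl⟩, by rw [h, hP x hx, hQ x hx]; push_cast; ring⟩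
      · exact ⟨_, ⟨x, hx, Or.inr rfl⟩, by rw [h, hP x hx, hQ x hx]; push_cast; ring⟩
    · rintro ⟨z, ⟨x, hx, h | h⟩, hw⟩
      · exact ⟨x, hx, Or.inl (by rw [← hw, h, hP x hx, hQ x hx]; push_cast; ring)⟩
      · exact ⟨x, hx, Or.inr (by rw [← hw, h, hP x hx, hQ x hx]; push_cast; ring)⟩
end
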